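/- Let (X,Y) be jointly distributed random variables on [0,1]² and let P(k) denote the set of finite partitions of [0,1] into at most k intervals. Then MIC*(X,Y) = sup over all finite partitions P of the maximum of I(X, Y|_P)/log|P| and I(X|_P, Y)/log|P|, where |P| is the number of bins of P. -/

import Mathlib

open MeasureTheory Real Filter Topology
open scoped ENNReal

/-- Discrete mutual information of a joint distribution `μ` on `ℝ × ℝ` discretized by a grid
with row-quantizer `rowf` (on the y-axis, values below `k`) and column-quantizer `colf`
(on the x-axis, values below `l`): `I = H(rows) + H(cols) − H(cells)`. -/
noncomputable def gridMI (μ : Measure (ℝ × ℝ)) (k l : ℕ) (rowf colf : ℝ → ℕ) : ℝ :=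
    (∑ i ∈ Finset.range k, Real.negMulLog ((μ {z | rowf z.2 = i}).toReal))
  + (∑ j ∈ Finset.range l, Real.negMulLog ((μ {z | colf z.1 = j}).toReal))
  - ∑ i ∈ Finset.range k, ∑ j ∈ Finset.range l,
      Real.negMulLog ((μ {z | rowf z.2 = i ∧ colf z.1 = j}).toReal)

/-- A partition of the line into at most `k` intervals, encoded as a monotone cell-index map. -/
def IsIntervalPart (k : ℕ) (p : ℝ → ℕ) : Prop := Monotone p ∧ ∀ t, p t < k

/-- A finite measurable partition of the line into at most `k` cells. -/
def IsMeasPart (k : ℕ) (p : ℝ → ℕ) : Prop := Measurable p ∧ ∀ t, p t < k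

/-- `I*((X,Y),k,ℓ)`: the supremum of discrete mutual information over all `k`-row-by-`ℓ`-column
grids applied to the joint distribution `μ`. -/
noncomputable def IStar (μ : Measure (ℝ × ℝ)) (k l : ℕ) : ℝ :=
  ⨆ g : {g : (ℝ → ℕ) × (ℝ → ℕ) // IsIntervalPart k g.1 ∧ IsIntervalPart l g.2},
    gridMI μ k l g.1.1 g.1.2

/-- The `(k,ℓ)` entry of the population characteristic matrix. -/
noncomputable def charMatrix (μ : Measure (ℝ × ℝ)) (k l : ℕ) : ℝ :=
  IStar μ k l / Real.log (min k l)

/-- The population maximal information coefficient `MIC*`. -/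
noncomputable def MICStar (μ : Measure (ℝ × ℝ)) : ℝ :=
  ⨆ (k : {n : ℕ // 1 < n}) (l : {n : ℕ // 1 < n}), charMatrix μ k l

/-- `I(X, Y|_P)`: mutual information between `X` and the discretization of `Y` by the
partition `rowf` (into at most `k` cells), defined as the supremum of discrete mutual
informations over all finite measurable quantizations of `X`. -/
noncomputable def mixedMI_Y (μ : Measure (ℝ × ℝ)) (k : ℕ) (rowf : ℝ → ℕ) : ℝ :=
  ⨆ c : {c : ℕ × (ℝ → ℕ) // IsMeasPart c.1 c.2}, gridMI μ k c.1.1 rowf c.1.2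

/-- `I(X|_P, Y)`: mutual information between the discretization of `X` by the partition
`colf` (into at most `ℓ` cells) and `Y`. -/
noncomputable def mixedMI_X (μ : Measure (ℝ × ℝ)) (l : ℕ) (colf : ℝ → ℕ) : ℝ :=
  ⨆ r : {r : ℕ × (ℝ → ℕ) // IsMeasPart r.1 r.2}, gridMI μ r.1.1 l r.1.2 colf

/-- The mutual information of a joint distribution on `ℝ × ℝ` (possibly infinite), defined as
the supremum over all finite measurable quantizations of both coordinates of the discrete
mutual information. -/
noncomputable def mutualInfo (μ : Measure (ℝ × ℝ)) : ℝ≥0∞ :=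
  ⨆ g : {g : (ℕ × (ℝ → ℕ)) × (ℕ × (ℝ → ℕ)) //
      IsMeasPart g.1.1 g.1.2 ∧ IsMeasPart g.2.1 g.2.2},
    ENNReal.ofReal (gridMI μ g.1.1.1 g.1.2.1 g.1.1.2 g.1.2.2)

/-!
`MIC* ≤ sup`: a `k × ℓ` grid with `k ≤ ℓ` is one particular discretization of `X`, so its mutual
information is at most `I(X, Y|_P)` for its row partition `P`; symmetrically when `k > ℓ`.

`sup ≤ MIC*`: fix an interval partition `P` of `Y` into `k > 1` cells and a measurable partition
`Q` of `X` into `ℓ` cells. Approximating the cells of `Q` (in the law of `X`) by finite unions of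
intervals yields a coarsening of an interval partition `Q'`, which may have many cells; merging
columns cannot increase mutual information, so its grid with `P` carries at most
`I*(k, |Q'|) ≤ MIC* · log k` once `|Q'| ≥ k`. The discrete mutual information depends continuously
on the cell masses, so the bound passes to `Q`. The `I(X|_P, Y)` term follows by swapping the
coordinates.
-/

open scoped symmDiff

namespace Real

lemma negMulLog_add_negMulLog_sub_negMulLog_add {x y : ℝ} (hx : 0 ≤ x) (hy : 0 ≤ y) :
    negMulLog x + negMulLog y - negMulLog (x + y) =
      -(x * log (x / (x + y)) + y * log (y / (x + y))) := by
  rcases hx.eq_or_lt with rfl | hx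
  · simp
  rcases hy.eq_or_lt with rfl | hy
  · simp
  rw [log_div hx.ne' (by positivity), log_div hy.ne' (by positivity)]
  simp only [negMulLog]
  ring

lemma negMulLog_add_le {x y : ℝ} (hx : 0 ≤ x) (hy : 0 ≤ y) :
    negMulLog (x + y) ≤ negMulLog x + negMulLog y := by
  have hxy : 0 ≤ x + y := add_nonneg hx hy
  have h₁ : x * log (x / (x + y)) ≤ 0 := mul_nonpos_of_nonneg_of_nonpos hx
    (log_nonpos (by positivity) (div_le_one_of_le₀ (le_add_of_nonneg_right hy) hxy))
  have h₂ : y * log (y / (x + y)) ≤ 0 := mul_nonpos_of_nonneg_of_nonpos hy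
    (log_nonpos (by positivity) (div_le_one_of_le₀ (le_add_of_nonneg_left hx) hxy))
  linarith [negMulLog_add_negMulLog_sub_negMulLog_add hx hy]

lemma negMulLog_sum_le {ι : Type*} (s : Finset ι) (v : ι → ℝ) (hv : ∀ i ∈ s, 0 ≤ v i) :
    negMulLog (∑ i ∈ s, v i) ≤ ∑ i ∈ s, negMulLog (v i) := by
  induction s using Finset.cons_induction with
  | empty => simp
  | cons a s ha ih =>
    rw [Finset.sum_cons, Finset.sum_cons]
    have hv' : ∀ i ∈ s, 0 ≤ v i := fun i hi => hv i (Finset.mem_cons_of_mem hi)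
    calc negMulLog (v a + ∑ i ∈ s, v i)
        ≤ negMulLog (v a) + negMulLog (∑ i ∈ s, v i) :=
          negMulLog_add_le (hv a (Finset.mem_cons_self a s)) (Finset.sum_nonneg hv')
      _ ≤ negMulLog (v a) + ∑ i ∈ s, negMulLog (v i) := by gcongr; exact ih hv'

lemma sum_negMulLog_le_log_card {ι : Type*} {s : Finset ι} {p : ι → ℝ}
    (hp : ∀ i ∈ s, 0 ≤ p i) (hsum : ∑ i ∈ s, p i = 1) :
    ∑ i ∈ s, negMulLog (p i) ≤ log s.card := by
  have hs : (0 : ℝ) < s.card := by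
    rcases s.eq_empty_or_nonempty with rfl | hne
    · simp at hsum
    · exact_mod_cast hne.card_pos
  have hw : ∑ _i ∈ s, (s.card : ℝ)⁻¹ = 1 := by simp [hs.ne']
  have hJensen := concaveOn_negMulLog.le_map_sum (fun _ _ => (inv_pos.2 hs).le) hw hp
  have hmid : negMulLog (s.card : ℝ)⁻¹ = (s.card : ℝ)⁻¹ * log s.card := by
    simp [negMulLog, log_inv]
  simp only [smul_eq_mul, ← Finset.mul_sum, hsum, mul_one, hmid] at hJensen
  exact le_of_mul_le_mul_left hJensen (inv_pos.2 hs)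

lemma sub_le_mul_log_div {p q : ℝ} (hp : 0 ≤ p) (hq : 0 < q) : p - q ≤ p * log (p / q) := by
  rcases hp.eq_or_lt with rfl | hp
  · simpa using hq.le
  have h := mul_le_mul_of_nonneg_left (log_le_sub_one_of_pos (div_pos hq hp)) hp.le
  have hpq : p * (q / p - 1) = q - p := by field_simp
  rw [hpq, ← inv_div, log_inv] at h
  linarith

/-- The log-sum inequality. -/
lemma sum_mul_log_div_sum_le {ι : Type*} (s : Finset ι) (a c : ι → ℝ) (ha : ∀ i ∈ s, 0 ≤ a i)
    (hac : ∀ i ∈ s, a i ≤ c i) :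
    (∑ i ∈ s, a i) * log ((∑ i ∈ s, a i) / ∑ i ∈ s, c i) ≤ ∑ i ∈ s, a i * log (a i / c i) := by
  rcases (Finset.sum_nonneg ha).eq_or_lt with hA | hA
  · have ha0 : ∀ i ∈ s, a i = 0 := (Finset.sum_eq_zero_iff_of_nonneg ha).1 hA.symm
    rw [← hA, zero_mul]
    exact Finset.sum_nonneg fun i hi => by simp [ha0 i hi]
  have hC : 0 < ∑ i ∈ s, c i := hA.trans_le (Finset.sum_le_sum hac)
  set ρ := (∑ i ∈ s, a i) / ∑ i ∈ s, c i
  have hρ : 0 < ρ := div_pos hA hC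
  -- `ρ` makes the left-hand sides sum to `0`
  have key : ∀ i ∈ s, a i - c i * ρ ≤ a i * log (a i / c i) - a i * log ρ := by
    intro i hi
    rcases (ha i hi).eq_or_lt with h0 | h0
    · rw [← h0]
      nlinarith [ha i hi, hac i hi]
    have hci : 0 < c i := h0.trans_le (hac i hi)
    have h := sub_le_mul_log_div h0.le (mul_pos hci hρ)
    rwa [← div_div, log_div (div_pos h0 hci).ne' hρ.ne', mul_sub] at h
  have hsum := Finset.sum_le_sum key
  have hCρ : (∑ i ∈ s, c i) * ρ = ∑ i ∈ s, a i := mul_div_cancel₀ _ hC.ne'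
  rw [Finset.sum_sub_distrib, Finset.sum_sub_distrib, ← Finset.sum_mul, ← Finset.sum_mul,
    hCρ, sub_self] at hsum
  linarith

end Real

/-- For `v ≥ 0` this is `(∑ v) · H(v / ∑ v)`, the entropy of the normalization of `v` weighted by
its mass. -/
noncomputable def scaledEntropy {ι : Type*} (s : Finset ι) (v : ι → ℝ) : ℝ :=
  ∑ i ∈ s, negMulLog (v i) - negMulLog (∑ i ∈ s, v i)

section scaledEntropy

variable {ι : Type*} {s : Finset ι}

lemma scaledEntropy_nonneg {v : ι → ℝ} (hv : ∀ i ∈ s, 0 ≤ v i) : 0 ≤ scaledEntropy s v :=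
  sub_nonneg.2 (negMulLog_sum_le s v hv)

lemma scaledEntropy_add_scaledEntropy_le {a b : ι → ℝ} (ha : ∀ i ∈ s, 0 ≤ a i)
    (hb : ∀ i ∈ s, 0 ≤ b i) :
    scaledEntropy s a + scaledEntropy s b ≤ scaledEntropy s (a + b) := by
  have hlogsum_a := sum_mul_log_div_sum_le s a (a + b) ha
    fun i hi => le_add_of_nonneg_right (hb i hi)
  have hlogsum_b := sum_mul_log_div_sum_le s b (a + b) hb
    fun i hi => le_add_of_nonneg_left (ha i hi)
  have hpoint : ∑ i ∈ s, (negMulLog (a i) + negMulLog (b i) - negMulLog (a i + b i)) =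
      -(∑ i ∈ s, a i * log (a i / (a i + b i)) + ∑ i ∈ s, b i * log (b i / (a i + b i))) := by
    rw [← Finset.sum_add_distrib, ← Finset.sum_neg_distrib]
    exact Finset.sum_congr rfl fun i hi =>
      negMulLog_add_negMulLog_sub_negMulLog_add (ha i hi) (hb i hi)
  have htotal := negMulLog_add_negMulLog_sub_negMulLog_add (Finset.sum_nonneg ha)
    (Finset.sum_nonneg hb)
  simp only [Pi.add_apply, Finset.sum_add_distrib, Finset.sum_sub_distrib] at *
  simp only [scaledEntropy, Pi.add_apply, Finset.sum_add_distrib]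
  linarith

lemma sum_scaledEntropy_le {κ : Type*} (t : Finset κ) (v : κ → ι → ℝ)
    (hv : ∀ j ∈ t, ∀ i ∈ s, 0 ≤ v j i) :
    ∑ j ∈ t, scaledEntropy s (v j) ≤ scaledEntropy s (∑ j ∈ t, v j) := by
  induction t using Finset.cons_induction with
  | empty => simp [scaledEntropy]
  | cons a t ha ih =>
    have hv' : ∀ j ∈ t, ∀ i ∈ s, 0 ≤ v j i := fun j hj => hv j (Finset.mem_cons_of_mem hj)
    rw [Finset.sum_cons, Finset.sum_cons]
    calc scaledEntropy s (v a) + ∑ j ∈ t, scaledEntropy s (v j)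
        ≤ scaledEntropy s (v a) + scaledEntropy s (∑ j ∈ t, v j) := by gcongr; exact ih hv'
      _ ≤ scaledEntropy s (v a + ∑ j ∈ t, v j) :=
        scaledEntropy_add_scaledEntropy_le (hv a (Finset.mem_cons_self a t)) fun i hi => by
          rw [Finset.sum_apply]
          exact Finset.sum_nonneg fun j hj => hv' j hj i hi

end scaledEntropy

lemma sum_toReal_measure_preimage_inter {α β : Type*} [MeasurableSpace α] (μ : Measure α)
    [IsFiniteMeasure μ] (s : Finset β) {g : α → β} (hg : ∀ b ∈ s, MeasurableSet (g ⁻¹' {b}))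
    {S : Set α} (hS : S ⊆ g ⁻¹' s) :
    ∑ b ∈ s, (μ (g ⁻¹' {b} ∩ S)).toReal = (μ S).toReal := by
  rw [← ENNReal.toReal_sum fun _ _ => measure_ne_top μ _]
  congr 1
  calc ∑ b ∈ s, μ (g ⁻¹' {b} ∩ S) = ∑ b ∈ s, μ.restrict S (g ⁻¹' {b}) :=
        Finset.sum_congr rfl fun b hb => (Measure.restrict_apply (hg b hb)).symm
    _ = μ.restrict S (g ⁻¹' s) := sum_measure_preimage_singleton s hg
    _ = μ S := Measure.restrict_apply_superset hS

lemma sum_toReal_measure_preimage_eq_one {α : Type*} [MeasurableSpace α] (μ : Measure α)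
    [IsProbabilityMeasure μ] {k : ℕ} {g : α → ℕ} (hg : Measurable g) (hgk : ∀ z, g z < k) :
    ∑ i ∈ Finset.range k, (μ (g ⁻¹' {i})).toReal = 1 := by
  have h := sum_toReal_measure_preimage_inter μ (Finset.range k)
    (fun i _ => hg (measurableSet_singleton i)) (S := Set.univ) fun z _ => by simpa using hgk z
  simpa using h

lemma Measure.map_swap_apply {α β : Type*} [MeasurableSpace α] [MeasurableSpace β]
    (μ : Measure (α × β)) (S : Set (β × α)) : μ.map Prod.swap S = μ (Prod.swap ⁻¹' S) :=
  MeasurableEquiv.prodComm.map_apply S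

instance {α β : Type*} [MeasurableSpace α] [MeasurableSpace β] (μ : Measure (α × β))
    [IsProbabilityMeasure μ] : IsProbabilityMeasure (μ.map Prod.swap) :=
  Measure.isProbabilityMeasure_map measurable_swap.aemeasurable

section gridMI

variable {k l : ℕ} {rowf colf : ℝ → ℕ}

lemma gridMI_eq_sub_sum_scaledEntropy (μ : Measure (ℝ × ℝ)) [IsFiniteMeasure μ]
    (hrow : Measurable rowf) (hrk : ∀ t, rowf t < k) :
    gridMI μ k l rowf colf =
      ∑ i ∈ Finset.range k, negMulLog (μ {z | rowf z.2 = i}).toReal -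
        ∑ j ∈ Finset.range l,
          scaledEntropy (Finset.range k) fun i => (μ {z | rowf z.2 = i ∧ colf z.1 = j}).toReal := by
  have hcol_marginal : ∀ j, (μ {z | colf z.1 = j}).toReal =
      ∑ i ∈ Finset.range k, (μ {z | rowf z.2 = i ∧ colf z.1 = j}).toReal := fun j =>
    (sum_toReal_measure_preimage_inter μ (Finset.range k) (g := fun z => rowf z.2)
      (fun i _ => hrow.comp measurable_snd (measurableSet_singleton i))
      fun z _ => by simpa using hrk z.2).symm
  simp only [gridMI, scaledEntropy, hcol_marginal, Finset.sum_sub_distrib]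
  rw [Finset.sum_comm (s := Finset.range k)]
  ring

lemma gridMI_le_log (μ : Measure (ℝ × ℝ)) [IsProbabilityMeasure μ]
    (hrow : Measurable rowf) (hrk : ∀ t, rowf t < k) :
    gridMI μ k l rowf colf ≤ log k := by
  rw [gridMI_eq_sub_sum_scaledEntropy μ hrow hrk]
  have hentropy := sum_negMulLog_le_log_card (fun _ _ => ENNReal.toReal_nonneg)
    (sum_toReal_measure_preimage_eq_one μ (g := fun z => rowf z.2)
      (hrow.comp measurable_snd) fun z => hrk z.2)
  rw [Finset.card_range] at hentropy
  have hdefect := Finset.sum_nonneg fun j (_ : j ∈ Finset.range l) =>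
    scaledEntropy_nonneg (s := Finset.range k)
      (v := fun i => (μ {z | rowf z.2 = i ∧ colf z.1 = j}).toReal) fun _ _ => ENNReal.toReal_nonneg
  exact (sub_le_self _ hdefect).trans hentropy

lemma gridMI_map_swap (μ : Measure (ℝ × ℝ)) :
    gridMI (μ.map Prod.swap) l k colf rowf = gridMI μ k l rowf colf := by
  simp only [gridMI, Measure.map_swap_apply, Set.preimage_ofPred_eq, Prod.fst_swap,
    Prod.snd_swap, and_comm]
  rw [Finset.sum_comm]
  ring

lemma gridMI_le_log_right (μ : Measure (ℝ × ℝ)) [IsProbabilityMeasure μ]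
    (hcol : Measurable colf) (hcl : ∀ t, colf t < l) :
    gridMI μ k l rowf colf ≤ log l := by
  rw [← gridMI_map_swap]
  exact gridMI_le_log _ hcol hcl

lemma gridMI_comp_le (μ : Measure (ℝ × ℝ)) [IsFiniteMeasure μ] {l' : ℕ} {colf' : ℝ → ℕ}
    (hrow : Measurable rowf) (hrk : ∀ t, rowf t < k) (hcol' : Measurable colf')
    (hcl' : ∀ t, colf' t < l') {σ : ℕ → ℕ} (hσ : ∀ j < l', σ j < l) :
    gridMI μ k l rowf (σ ∘ colf') ≤ gridMI μ k l' rowf colf' := by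
  rw [gridMI_eq_sub_sum_scaledEntropy μ hrow hrk, gridMI_eq_sub_sum_scaledEntropy μ hrow hrk]
  refine sub_le_sub_left ?_ _
  have hfiber : ∀ i j, (μ {z | rowf z.2 = i ∧ (σ ∘ colf') z.1 = j}).toReal =
      ∑ j' ∈ (Finset.range l').filter (σ · = j),
        (μ {z | rowf z.2 = i ∧ colf' z.1 = j'}).toReal := by
    intro i j
    rw [← sum_toReal_measure_preimage_inter μ ((Finset.range l').filter (σ · = j))
      (g := fun z => colf' z.1) (fun j' _ => hcol'.comp measurable_fst (measurableSet_singleton j'))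
      fun z hz => by simp_all]
    refine Finset.sum_congr rfl fun j' hj' => ?_
    congr 2
    ext z
    simp only [Finset.mem_filter] at hj'
    simp only [Set.mem_inter_iff, Set.mem_preimage, Set.mem_singleton_iff, Set.mem_ofPred_eq,
      Function.comp_apply]
    constructor
    · rintro ⟨hj, hi, -⟩
      exact ⟨hi, hj⟩
    · rintro ⟨hi, hj⟩
      exact ⟨hj, hi, hj ▸ hj'.2⟩
  -- merging columns adds their column vectors, and `scaledEntropy` is superadditive
  calc ∑ j' ∈ Finset.range l', scaledEntropy (Finset.range k)
        (fun i => (μ {z | rowf z.2 = i ∧ colf' z.1 = j'}).toReal)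
      = ∑ j ∈ Finset.range l, ∑ j' ∈ (Finset.range l').filter (σ · = j),
          scaledEntropy (Finset.range k)
            (fun i => (μ {z | rowf z.2 = i ∧ colf' z.1 = j'}).toReal) :=
        (Finset.sum_fiberwise_of_maps_to (fun j' hj' => by simpa using hσ j' (by simpa using hj'))
          _).symm
    _ ≤ ∑ j ∈ Finset.range l, scaledEntropy (Finset.range k)
          (fun i => (μ {z | rowf z.2 = i ∧ (σ ∘ colf') z.1 = j}).toReal) := by
        refine Finset.sum_le_sum fun j _ =>
          (sum_scaledEntropy_le _ _ fun _ _ _ _ => ENNReal.toReal_nonneg).trans_eq ?_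
        congr 1
        ext i
        rw [Finset.sum_apply, hfiber]

lemma gridMI_const_right (μ : Measure (ℝ × ℝ)) [IsProbabilityMeasure μ] :
    gridMI μ k 1 rowf (fun _ => 0) = 0 := by
  simp [gridMI]

lemma gridMI_nonneg (μ : Measure (ℝ × ℝ)) [IsProbabilityMeasure μ]
    (hrow : Measurable rowf) (hrk : ∀ t, rowf t < k) (hcol : Measurable colf)
    (hcl : ∀ t, colf t < l) : 0 ≤ gridMI μ k l rowf colf :=
  (gridMI_const_right μ).symm.le.trans
    (gridMI_comp_le μ hrow hrk hcol hcl (σ := fun _ => 0) fun _ _ => Nat.one_pos)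

end gridMI

lemma IsIntervalPart.isMeasPart {k : ℕ} {p : ℝ → ℕ} (hp : IsIntervalPart k p) :
    IsMeasPart k p :=
  ⟨hp.1.measurable, hp.2⟩

lemma mixedMI_X_eq_mixedMI_Y_map_swap {l : ℕ} {colf : ℝ → ℕ} (μ : Measure (ℝ × ℝ)) :
    mixedMI_X μ l colf = mixedMI_Y (μ.map Prod.swap) l colf :=
  iSup_congr fun _ => (gridMI_map_swap μ).symm

section supremum

variable (μ : Measure (ℝ × ℝ)) [IsProbabilityMeasure μ] {k l : ℕ} {rowf colf : ℝ → ℕ}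

lemma IStar_bddAbove (k l : ℕ) :
    BddAbove (Set.range fun g : {g : (ℝ → ℕ) × (ℝ → ℕ) //
      IsIntervalPart k g.1 ∧ IsIntervalPart l g.2} => gridMI μ k l g.1.1 g.1.2) :=
  ⟨log k, Set.forall_mem_range.2 fun g => gridMI_le_log μ g.2.1.1.measurable g.2.1.2⟩

lemma gridMI_le_IStar (hrow : IsIntervalPart k rowf) (hcol : IsIntervalPart l colf) :
    gridMI μ k l rowf colf ≤ IStar μ k l :=
  le_ciSup (IStar_bddAbove μ k l) ⟨(rowf, colf), hrow, hcol⟩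

lemma IStar_nonneg (hk : 0 < k) (hl : 0 < l) : 0 ≤ IStar μ k l :=
  (gridMI_nonneg μ measurable_const (fun _ => hk) measurable_const fun _ => hl).trans
    (gridMI_le_IStar μ ⟨monotone_const, fun _ => hk⟩ ⟨monotone_const, fun _ => hl⟩)

lemma IStar_le_log_min (hk : 0 < k) (hl : 0 < l) : IStar μ k l ≤ log (min k l) := by
  refine Real.iSup_le (fun ⟨g, hrow, hcol⟩ => ?_)
    (log_nonneg (le_min (by exact_mod_cast hk) (by exact_mod_cast hl)))
  rcases le_total k l with h | h
  · rw [min_eq_left (by exact_mod_cast h)]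
    exact gridMI_le_log μ hrow.1.measurable hrow.2
  · rw [min_eq_right (by exact_mod_cast h)]
    exact gridMI_le_log_right μ hcol.1.measurable hcol.2

lemma charMatrix_nonneg (hk : 1 < k) (hl : 1 < l) : 0 ≤ charMatrix μ k l :=
  div_nonneg (IStar_nonneg μ (by omega) (by omega))
    (log_nonneg (le_min (by exact_mod_cast hk.le) (by exact_mod_cast hl.le)))

lemma charMatrix_le_one (hk : 1 < k) (hl : 1 < l) : charMatrix μ k l ≤ 1 :=
  div_le_one_of_le₀ (IStar_le_log_min μ (by omega) (by omega))
    (log_nonneg (le_min (by exact_mod_cast hk.le) (by exact_mod_cast hl.le)))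

lemma charMatrix_le_MICStar (hk : 1 < k) (hl : 1 < l) : charMatrix μ k l ≤ MICStar μ := by
  have hrow_le_one : ∀ k' : {n : ℕ // 1 < n}, ⨆ l' : {n : ℕ // 1 < n}, charMatrix μ k' l' ≤ 1 :=
    fun k' => Real.iSup_le (fun l' => charMatrix_le_one μ k'.2 l'.2) zero_le_one
  refine le_trans ?_ (le_ciSup ⟨1, Set.forall_mem_range.2 hrow_le_one⟩ ⟨k, hk⟩)
  exact le_ciSup (f := fun l' : {n : ℕ // 1 < n} => charMatrix μ k l')
    ⟨1, Set.forall_mem_range.2 fun l' => charMatrix_le_one μ hk l'.2⟩ ⟨l, hl⟩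

lemma MICStar_nonneg : 0 ≤ MICStar μ :=
  (charMatrix_nonneg μ one_lt_two one_lt_two).trans (charMatrix_le_MICStar μ one_lt_two one_lt_two)

lemma IStar_map_swap_le (hk : 0 < k) (hl : 0 < l) : IStar (μ.map Prod.swap) k l ≤ IStar μ l k :=
  Real.iSup_le (fun ⟨_, hrow, hcol⟩ => (gridMI_map_swap μ).trans_le
    (gridMI_le_IStar μ hcol hrow)) (IStar_nonneg μ hl hk)

lemma MICStar_map_swap_le : MICStar (μ.map Prod.swap) ≤ MICStar μ := by
  refine Real.iSup_le (fun k => Real.iSup_le (fun l => ?_) (MICStar_nonneg μ)) (MICStar_nonneg μ)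
  refine le_trans ?_ (charMatrix_le_MICStar μ l.2 k.2)
  rw [charMatrix, charMatrix, min_comm]
  exact div_le_div_of_nonneg_right (IStar_map_swap_le μ (by omega) (by omega))
    (log_nonneg (le_min (by exact_mod_cast l.2.le) (by exact_mod_cast k.2.le)))

lemma mixedMI_Y_bddAbove (hrow : IsMeasPart k rowf) :
    BddAbove (Set.range fun c : {c : ℕ × (ℝ → ℕ) // IsMeasPart c.1 c.2} =>
      gridMI μ k c.1.1 rowf c.1.2) :=
  ⟨log k, Set.forall_mem_range.2 fun _ => gridMI_le_log μ hrow.1 hrow.2⟩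

lemma gridMI_le_mixedMI_Y (hrow : IsMeasPart k rowf) (hcol : IsMeasPart l colf) :
    gridMI μ k l rowf colf ≤ mixedMI_Y μ k rowf :=
  le_ciSup (mixedMI_Y_bddAbove μ hrow) ⟨(l, colf), hcol⟩

lemma mixedMI_Y_nonneg (hrow : IsMeasPart k rowf) : 0 ≤ mixedMI_Y μ k rowf :=
  (gridMI_nonneg μ hrow.1 hrow.2 measurable_const fun _ => Nat.one_pos).trans
    (gridMI_le_mixedMI_Y μ hrow ⟨measurable_const, fun _ => Nat.one_pos⟩)

lemma mixedMI_Y_le_log (hrow : IsMeasPart k rowf) : mixedMI_Y μ k rowf ≤ log k :=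
  Real.iSup_le (fun _ => gridMI_le_log μ hrow.1 hrow.2)
    (log_nonneg (by exact_mod_cast (Nat.zero_le _).trans_lt (hrow.2 0)))

lemma gridMI_le_mixedMI_X (hrow : IsMeasPart k rowf) (hcol : IsMeasPart l colf) :
    gridMI μ k l rowf colf ≤ mixedMI_X μ l colf := by
  rw [mixedMI_X_eq_mixedMI_Y_map_swap, ← gridMI_map_swap]
  exact gridMI_le_mixedMI_Y _ hcol hrow

lemma mixedMI_X_le_log (hcol : IsMeasPart l colf) : mixedMI_X μ l colf ≤ log l := by
  rw [mixedMI_X_eq_mixedMI_Y_map_swap]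
  exact mixedMI_Y_le_log _ hcol

end supremum

lemma exists_finset_mem_iff_of_mem_generateSetAlgebra_Iic {t : Set ℝ}
    (ht : t ∈ generateSetAlgebra (Set.range (Set.Iic : ℝ → Set ℝ))) :
    ∃ T : Finset ℝ, ∀ x y, (∀ b ∈ T, b < x ↔ b < y) → (x ∈ t ↔ y ∈ t) := by
  induction ht with
  | base s hs =>
    obtain ⟨a, rfl⟩ := hs
    refine ⟨{a}, fun x y h => ?_⟩
    simp only [Set.mem_Iic, ← not_lt]
    exact not_congr (h a (Finset.mem_singleton_self a))
  | empty => exact ⟨∅, fun _ _ _ => Iff.rfl⟩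
  | compl s _ ih =>
    obtain ⟨T, hT⟩ := ih
    exact ⟨T, fun x y h => not_congr (hT x y h)⟩
  | union s u _ _ ihs ihu =>
    obtain ⟨T₁, h₁⟩ := ihs
    obtain ⟨T₂, h₂⟩ := ihu
    exact ⟨T₁ ∪ T₂, fun x y h =>
      or_congr (h₁ x y fun b hb => h b (Finset.mem_union_left _ hb))
        (h₂ x y fun b hb => h b (Finset.mem_union_right _ hb))⟩

lemma forall_lt_iff_of_card_filter_lt_eq {α : Type*} [LinearOrder α] {T : Finset α} {x y : α}
    (h : (T.filter (· < x)).card = (T.filter (· < y)).card) : ∀ b ∈ T, b < x ↔ b < y := by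
  wlog hxy : x ≤ y generalizing x y
  · exact fun b hb => (this h.symm (le_of_not_ge hxy) b hb).symm
  have hsub : T.filter (· < x) ⊆ T.filter (· < y) :=
    Finset.monotone_filter_right T fun _ _ hb => hb.trans_le hxy
  have heq := Finset.eq_of_subset_of_card_le hsub h.ge
  intro b hb
  simpa [hb] using Finset.ext_iff.1 heq b

lemma exists_monotone_comp_approx (ν : Measure ℝ) [IsFiniteMeasure ν] {l : ℕ} {colf : ℝ → ℕ}
    (hcol : Measurable colf) (hcl : ∀ x, colf x < l) {ε : ℝ} (hε : 0 < ε) :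
    ∃ (r : ℝ → ℕ) (m : ℕ) (σ : ℕ → ℕ), Monotone r ∧ (∀ x, r x < m) ∧ (∀ j, σ j < l) ∧
      ν {x | σ (r x) ≠ colf x} ≤ l * ENNReal.ofReal ε := by
  classical
  have hdense : ν.MeasureDense (generateSetAlgebra (Set.range (Set.Iic : ℝ → Set ℝ))) :=
    .of_generateFrom_isSetAlgebra_finite ν isSetAlgebra_generateSetAlgebra <| by
      rw [generateFrom_generateSetAlgebra_eq, ← borel_eq_generateFrom_Iic]
      exact BorelSpace.measurable_eq
  choose t ht hνt using fun j => hdense.approx _ (hcol (measurableSet_singleton j))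
    (measure_ne_top ν _) ε hε
  choose T hT using fun j => exists_finset_mem_iff_of_mem_generateSetAlgebra_Iic (ht j)
  set cuts := (Finset.range l).biUnion T
  set r : ℝ → ℕ := fun x => (cuts.filter (· < x)).card
  -- `g x` is the least `j < l` with `x ∈ t j`, and `0` if there is none (`sInf ∅ = 0`)
  set g : ℝ → ℕ := fun x => sInf {j | j < l ∧ x ∈ t j}
  have hl : 0 < l := (Nat.zero_le _).trans_lt (hcl 0)
  have hg_lt : ∀ x, g x < l := fun x => by
    rcases Set.eq_empty_or_nonempty {j | j < l ∧ x ∈ t j} with h | h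
    · simp only [g, h, Nat.sInf_empty, hl]
    · exact (Nat.sInf_mem h).1
  have hg_factors : g.FactorsThrough r := fun x y hxy => by
    have hcuts := forall_lt_iff_of_card_filter_lt_eq hxy
    simp only [g]
    congr 1
    ext j
    exact and_congr_right fun hj => hT j x y fun b hb =>
      hcuts b (Finset.mem_biUnion.2 ⟨j, Finset.mem_range.2 hj, hb⟩)
  refine ⟨r, cuts.card + 1, Function.extend r g fun _ => 0,
    fun x y hxy => Finset.card_le_card
      (Finset.monotone_filter_right _ fun _ _ hb => hb.trans_le hxy),
    fun x => Nat.lt_succ_of_le (Finset.card_filter_le _ _), fun j => ?_, ?_⟩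
  · rw [Function.extend_def]
    split_ifs
    exacts [hg_lt _, hl]
  simp only [hg_factors.extend_apply]
  have hsub : {x | g x ≠ colf x} ⊆ ⋃ j ∈ Finset.range l, (colf ⁻¹' {j}) ∆ t j := by
    intro x hx
    by_contra hnot
    simp only [Set.mem_iUnion, Finset.mem_range, not_exists] at hnot
    have hiff : ∀ j < l, colf x = j ↔ x ∈ t j := fun j hj => by
      have := hnot j hj
      simp only [Set.mem_symmDiff, Set.mem_preimage, Set.mem_singleton_iff] at this
      tauto
    obtain ⟨hgl, hgt⟩ := Nat.sInf_mem (s := {j | j < l ∧ x ∈ t j})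
      ⟨colf x, hcl x, (hiff _ (hcl x)).1 rfl⟩
    exact hx ((hiff _ hgl).2 hgt).symm
  calc ν {x | g x ≠ colf x} ≤ ν (⋃ j ∈ Finset.range l, (colf ⁻¹' {j}) ∆ t j) := measure_mono hsub
    _ ≤ ∑ j ∈ Finset.range l, ν ((colf ⁻¹' {j}) ∆ t j) := measure_biUnion_finset_le _ _
    _ ≤ ∑ _j ∈ Finset.range l, ENNReal.ofReal ε := Finset.sum_le_sum fun j _ => (hνt j).le
    _ = l * ENNReal.ofReal ε := by simp

lemma tendsto_toReal_measure_of_symmDiff_subset {α ι : Type*} [MeasurableSpace α]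
    {μ : Measure α} [IsFiniteMeasure μ] {F : Filter ι} {S D : ι → Set α} {S₀ : Set α}
    (hS : ∀ n, MeasurableSet (S n)) (hS₀ : MeasurableSet S₀) (hSD : ∀ n, S n ∆ S₀ ⊆ D n)
    (hD : Tendsto (fun n => μ (D n)) F (𝓝 0)) :
    Tendsto (fun n => (μ (S n)).toReal) F (𝓝 (μ S₀).toReal) := by
  have hD' : Tendsto (fun n => (μ (D n)).toReal) F (𝓝 0) := by
    have h := (ENNReal.tendsto_toReal ENNReal.zero_ne_top).comp hD
    rwa [ENNReal.toReal_zero] at h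
  rw [← tendsto_sub_nhds_zero_iff]
  refine squeeze_zero_norm (fun n => ?_) hD'
  exact (abs_measureReal_sub_le_measureReal_symmDiff (hS n).nullMeasurableSet
    hS₀.nullMeasurableSet).trans (measureReal_mono (hSD n))

lemma tendsto_gridMI_right {ι : Type*} {F : Filter ι} {μ : Measure (ℝ × ℝ)} [IsFiniteMeasure μ]
    {k l : ℕ} {rowf colf : ℝ → ℕ} {g : ι → ℝ → ℕ} (hrow : Measurable rowf)
    (hcol : Measurable colf) (hg : ∀ n, Measurable (g n))
    (hD : Tendsto (fun n => μ {z | g n z.1 ≠ colf z.1}) F (𝓝 0)) :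
    Tendsto (fun n => gridMI μ k l rowf (g n)) F (𝓝 (gridMI μ k l rowf colf)) := by
  have hcolset : ∀ (h : ℝ → ℕ), Measurable h → ∀ j, MeasurableSet {z : ℝ × ℝ | h z.1 = j} :=
    fun h hh j => hh.comp measurable_fst (measurableSet_singleton j)
  have hrowset : ∀ i, MeasurableSet {z : ℝ × ℝ | rowf z.2 = i} :=
    fun i => hrow.comp measurable_snd (measurableSet_singleton i)
  have hdisagree : ∀ (A : Set (ℝ × ℝ)) j n,
      (A ∩ {z | g n z.1 = j}) ∆ (A ∩ {z | colf z.1 = j}) ⊆ {z | g n z.1 ≠ colf z.1} := by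
    intro A j n z hz
    simp only [Set.mem_symmDiff, Set.mem_inter_iff, Set.mem_ofPred_eq] at hz ⊢
    grind
  unfold gridMI
  refine (tendsto_const_nhds.add (tendsto_finsetSum _ fun j _ => ?_)).sub
    (tendsto_finsetSum _ fun i _ => tendsto_finsetSum _ fun j _ => ?_)
  all_goals refine (continuous_negMulLog.tendsto _).comp ?_
  · simpa using tendsto_toReal_measure_of_symmDiff_subset
      (fun n => MeasurableSet.univ.inter (hcolset _ (hg n) j))
      (MeasurableSet.univ.inter (hcolset _ hcol j)) (hdisagree Set.univ j) hD
  · exact tendsto_toReal_measure_of_symmDiff_subset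
      (fun n => (hrowset i).inter (hcolset _ (hg n) j))
      ((hrowset i).inter (hcolset _ hcol j)) (hdisagree _ j) hD

noncomputable def charBoundary (μ : Measure (ℝ × ℝ)) (k : ℕ) (p : ℝ → ℕ) : ℝ :=
  max (mixedMI_Y μ k p / log k) (mixedMI_X μ k p / log k)

section boundary

variable (μ : Measure (ℝ × ℝ)) [IsProbabilityMeasure μ] {k l : ℕ} {rowf colf : ℝ → ℕ}

lemma gridMI_comp_monotone_le_MICStar_mul_log (hk : 1 < k) (hrow : IsIntervalPart k rowf)
    {r : ℝ → ℕ} {m : ℕ} (hr : Monotone r) (hrm : ∀ x, r x < m) {σ : ℕ → ℕ}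
    (hσ : ∀ j, σ j < l) :
    gridMI μ k l rowf (σ ∘ r) ≤ MICStar μ * log k := by
  have hlog : 0 < log k := log_pos (by exact_mod_cast hk)
  have hkL : k ≤ max m k := le_max_right m k
  have hrL : ∀ x, r x < max m k := fun x => (hrm x).trans_le (le_max_left m k)
  calc gridMI μ k l rowf (σ ∘ r) ≤ gridMI μ k (max m k) rowf r :=
        gridMI_comp_le μ hrow.1.measurable hrow.2 hr.measurable hrL fun j _ => hσ j
    _ ≤ IStar μ k (max m k) := gridMI_le_IStar μ hrow ⟨hr, hrL⟩
    _ = charMatrix μ k (max m k) * log k := by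
        rw [charMatrix, min_eq_left (by exact_mod_cast hkL), div_mul_cancel₀ _ hlog.ne']
    _ ≤ MICStar μ * log k := by
        gcongr
        exact charMatrix_le_MICStar μ hk (hk.trans_le hkL)

lemma gridMI_le_MICStar_mul_log (hk : 1 < k) (hrow : IsIntervalPart k rowf)
    (hcol : IsMeasPart l colf) :
    gridMI μ k l rowf colf ≤ MICStar μ * log k := by
  choose r m σ hr hrm hσ hdisagree using fun n : ℕ =>
    exists_monotone_comp_approx (μ.map Prod.fst) hcol.1 hcol.2 (Nat.one_div_pos_of_nat (n := n))
  have hbound : Tendsto (fun n : ℕ => (l : ℝ≥0∞) * ENNReal.ofReal (1 / (n + 1))) atTop (𝓝 0) := by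
    simpa using ENNReal.Tendsto.const_mul
      (ENNReal.tendsto_ofReal tendsto_one_div_add_atTop_nhds_zero_nat)
      (Or.inr (ENNReal.natCast_ne_top l))
  have hD : Tendsto (fun n => μ {z | (σ n ∘ r n) z.1 ≠ colf z.1}) atTop (𝓝 0) :=
    tendsto_of_tendsto_of_tendsto_of_le_of_le tendsto_const_nhds hbound (fun _ => zero_le)
      fun n => (Measure.le_map_apply measurable_fst.aemeasurable _).trans (hdisagree n)
  exact le_of_tendsto
    (tendsto_gridMI_right hrow.1.measurable hcol.1
      (fun n => measurable_from_nat.comp (hr n).measurable) hD)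
    (Eventually.of_forall fun n =>
      gridMI_comp_monotone_le_MICStar_mul_log μ hk hrow (hr n) (hrm n) (hσ n))

lemma mixedMI_Y_le_MICStar_mul_log (hk : 1 < k) (hrow : IsIntervalPart k rowf) :
    mixedMI_Y μ k rowf ≤ MICStar μ * log k :=
  Real.iSup_le (fun c => gridMI_le_MICStar_mul_log μ hk hrow c.2)
    (mul_nonneg (MICStar_nonneg μ) (log_nonneg (by exact_mod_cast hk.le)))

lemma mixedMI_X_le_MICStar_mul_log (hk : 1 < k) (hcol : IsIntervalPart k colf) :
    mixedMI_X μ k colf ≤ MICStar μ * log k := by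
  rw [mixedMI_X_eq_mixedMI_Y_map_swap]
  exact (mixedMI_Y_le_MICStar_mul_log _ hk hcol).trans
    (mul_le_mul_of_nonneg_right (MICStar_map_swap_le μ) (log_nonneg (by exact_mod_cast hk.le)))

lemma charBoundary_nonneg {p : ℝ → ℕ} (hp : IsIntervalPart k p) : 0 ≤ charBoundary μ k p :=
  le_max_of_le_left (div_nonneg (mixedMI_Y_nonneg μ hp.isMeasPart)
    (log_nonneg (by exact_mod_cast (Nat.zero_le _).trans_lt (hp.2 0))))

lemma charBoundary_le_one {p : ℝ → ℕ} (hp : IsIntervalPart k p) : charBoundary μ k p ≤ 1 := by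
  have hlog : 0 ≤ log k := log_nonneg (by exact_mod_cast (Nat.zero_le _).trans_lt (hp.2 0))
  exact max_le (div_le_one_of_le₀ (mixedMI_Y_le_log μ hp.isMeasPart) hlog)
    (div_le_one_of_le₀ (mixedMI_X_le_log μ hp.isMeasPart) hlog)

lemma charBoundary_le_MICStar {p : ℝ → ℕ} (hp : IsIntervalPart k p) :
    charBoundary μ k p ≤ MICStar μ := by
  rcases Nat.lt_or_ge 1 k with hk | hk
  · have hlog : 0 < log k := log_pos (by exact_mod_cast hk)
    exact max_le ((div_le_iff₀ hlog).2 (mixedMI_Y_le_MICStar_mul_log μ hk hp))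
      ((div_le_iff₀ hlog).2 (mixedMI_X_le_MICStar_mul_log μ hk hp))
  · obtain rfl : k = 1 := by have := hp.2 0; omega
    simpa [charBoundary] using MICStar_nonneg μ

lemma MICStar_le_of_forall_charBoundary_le {c : ℝ}
    (hc : ∀ k p, IsIntervalPart k p → charBoundary μ k p ≤ c) (hc₀ : 0 ≤ c) : MICStar μ ≤ c := by
  refine Real.iSup_le (fun ⟨k, hk⟩ => Real.iSup_le (fun ⟨l, hl⟩ => ?_) hc₀) hc₀
  have hlogk : 0 < log k := log_pos (by exact_mod_cast hk)
  have hlogl : 0 < log l := log_pos (by exact_mod_cast hl)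
  have hlog_min : 0 < log (min (k : ℝ) l) := log_pos (lt_min (by exact_mod_cast hk)
    (by exact_mod_cast hl))
  rw [charMatrix, div_le_iff₀ hlog_min]
  refine Real.iSup_le (fun ⟨(rowf, colf), hrow, hcol⟩ => ?_) (mul_nonneg hc₀ hlog_min.le)
  rcases le_total k l with h | h
  · rw [min_eq_left (by exact_mod_cast h)]
    calc gridMI μ k l rowf colf ≤ mixedMI_Y μ k rowf :=
          gridMI_le_mixedMI_Y μ hrow.isMeasPart hcol.isMeasPart
      _ ≤ c * log k := (div_le_iff₀ hlogk).1 ((le_max_left _ _).trans (hc k rowf hrow))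
  · rw [min_eq_right (by exact_mod_cast h)]
    calc gridMI μ k l rowf colf ≤ mixedMI_X μ l colf :=
          gridMI_le_mixedMI_X μ hrow.isMeasPart hcol.isMeasPart
      _ ≤ c * log l := (div_le_iff₀ hlogl).1 ((le_max_right _ _).trans (hc l colf hcol))

end boundary

theorem stmt12_general (μ : Measure (ℝ × ℝ)) [IsProbabilityMeasure μ] :
    MICStar μ = ⨆ P : {q : ℕ × (ℝ → ℕ) // IsIntervalPart q.1 q.2},
      max (mixedMI_Y μ P.1.1 P.1.2 / Real.log P.1.1)
          (mixedMI_X μ P.1.1 P.1.2 / Real.log P.1.1) := by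
  change MICStar μ = ⨆ P : {q : ℕ × (ℝ → ℕ) // IsIntervalPart q.1 q.2}, charBoundary μ P.1.1 P.1.2
  have hbdd : BddAbove (Set.range fun P : {q : ℕ × (ℝ → ℕ) // IsIntervalPart q.1 q.2} =>
      charBoundary μ P.1.1 P.1.2) :=
    ⟨1, Set.forall_mem_range.2 fun P => charBoundary_le_one μ P.2⟩
  have hP₀ : IsIntervalPart 2 fun _ => 0 := ⟨monotone_const, fun _ => two_pos⟩
  refine le_antisymm (MICStar_le_of_forall_charBoundary_le μ
    (fun k p hp => le_ciSup hbdd ⟨(k, p), hp⟩) ?_) ?_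
  · exact (charBoundary_nonneg μ hP₀).trans (le_ciSup hbdd ⟨(2, fun _ => 0), hP₀⟩)
  · exact Real.iSup_le (fun P => charBoundary_le_MICStar μ P.2) (MICStar_nonneg μ)

/-- `MIC*(X,Y)` equals the supremum over all finite interval partitions `P` of
`max (I(X, Y|_P)/log|P|) (I(X|_P, Y)/log|P|)`. -/
theorem stmt12 (μ : Measure (ℝ × ℝ)) [IsProbabilityMeasure μ]
    (hsupp : μ ((Set.Icc (0 : ℝ) 1 ×ˢ Set.Icc (0 : ℝ) 1)ᶜ) = 0) :
    MICStar μ = ⨆ P : {q : ℕ × (ℝ → ℕ) // IsIntervalPart q.1 q.2},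
      max (mixedMI_Y μ P.1.1 P.1.2 / Real.log P.1.1)
          (mixedMI_X μ P.1.1 P.1.2 / Real.log P.1.1) :=
  stmt12_general μ
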